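/- Let g : ℝ → ℝ be a continuous L-periodic function with L > 0 and α > 0. Then for every step function φ on (0,1), ∫_0^1 g(x/ε^α) φ(x) dx → (1/L)(∫_0^L g(s) ds) ∫_0^1 φ(x) dx as ε → 0⁺. -/

import Mathlib

/-!
The function `F t = ∫ x in 0..t, g x - (t / L) • ∫ x in 0..L, g x` is continuous and `L`-periodic,
hence bounded by some `C`. Substituting `x = δ y` gives
`∫ x in a..b, g (x / δ) = ((b - a) / L) • ∫ x in 0..L, g x + δ • (F (b / δ) - F (a / δ))`,
so the error is at most `2 C δ`. Against a step function the integral splits into such pieces,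
and `δ = ε ^ α → 0⁺`.
-/

open Set Filter MeasureTheory intervalIntegral Topology

namespace Function.Periodic

variable {E : Type*} [NormedAddCommGroup E] [NormedSpace ℝ E] {g : ℝ → E} {L : ℝ}

theorem periodic_intervalIntegral_sub_smul (hg : Periodic g L) (hL : L ≠ 0)
    (h_int : ∀ a b, IntervalIntegrable g volume a b) :
    Periodic (fun t => (∫ x in 0..t, g x) - (t / L) • ∫ x in 0..L, g x) L := by
  intro t
  simp only [hg.intervalIntegral_add_eq_add 0 t h_int, zero_add, add_div, div_self hL, add_smul,
    one_smul]
  abel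

theorem exists_norm_intervalIntegral_sub_smul_le (hg : Periodic g L) (hL : L ≠ 0)
    (h_int : ∀ a b, IntervalIntegrable g volume a b) :
    ∃ C, ∀ t, ‖(∫ x in 0..t, g x) - (t / L) • ∫ x in 0..L, g x‖ ≤ C := by
  have hcont : Continuous fun t => (∫ x in 0..t, g x) - (t / L) • ∫ x in 0..L, g x :=
    (continuous_primitive h_int 0).sub ((continuous_id.div_const L).smul continuous_const)
  obtain ⟨C, hC⟩ := isBounded_iff_forall_norm_le.1
    ((hg.periodic_intervalIntegral_sub_smul hL h_int).isBounded_of_continuous hL hcont)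
  exact ⟨C, fun t => hC _ (mem_range_self t)⟩

theorem tendsto_intervalIntegral_comp_div (hg : Periodic g L) (hL : L ≠ 0)
    (h_int : ∀ a b, IntervalIntegrable g volume a b) (a b : ℝ) :
    Tendsto (fun δ => ∫ x in a..b, g (x / δ)) (𝓝[>] 0)
      (𝓝 (((b - a) / L) • ∫ x in 0..L, g x)) := by
  obtain ⟨C, hC⟩ := hg.exists_norm_intervalIntegral_sub_smul_le hL h_int
  set F := fun t => (∫ x in 0..t, g x) - (t / L) • ∫ x in 0..L, g x
  rw [← tendsto_sub_nhds_zero_iff]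
  refine squeeze_zero_norm' (a := fun δ => δ * (C + C)) ?_ ?_
  · filter_upwards [self_mem_nhdsWithin] with δ (hδ : 0 < δ)
    have hscale : (∫ x in a..b, g (x / δ)) - ((b - a) / L) • ∫ x in 0..L, g x
        = δ • (F (b / δ) - F (a / δ)) := by
      rw [integral_comp_div g hδ.ne', ← integral_interval_sub_left (h_int 0 _) (h_int 0 _)]
      simp only [F, smul_sub, smul_smul, ← mul_div_assoc, mul_div_cancel₀ _ hδ.ne', sub_div,
        sub_smul]
      abel
    rw [hscale, norm_smul, Real.norm_of_nonneg hδ.le]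
    gcongr
    exact (norm_sub_le _ _).trans (add_le_add (hC _) (hC _))
  · simpa using (tendsto_id.mul_const (C + C)).mono_left (nhdsWithin_le_nhds (a := (0:ℝ)))

end Function.Periodic

theorem tendsto_rpow_nhdsGT_zero {α : ℝ} (hα : 0 < α) :
    Tendsto (fun ε : ℝ => ε ^ α) (𝓝[>] 0) (𝓝[>] 0) := by
  refine tendsto_nhdsWithin_of_tendsto_nhds_of_eventually_within _ ?_ ?_
  · simpa [Real.zero_rpow hα.ne'] using
      ((Real.continuousAt_rpow_const 0 α (Or.inr hα.le)).tendsto).mono_left nhdsWithin_le_nhds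
  · filter_upwards [self_mem_nhdsWithin] with ε (hε : 0 < ε)
    exact Real.rpow_pos_of_pos hε α

theorem integral_mul_indicator_Ioo (h : ℝ → ℝ) {p q a b : ℝ} (hpa : p ≤ a) (hab : a ≤ b)
    (hbq : b ≤ q) :
    ∫ x in p..q, h x * (Ioo a b).indicator (fun _ => (1 : ℝ)) x = ∫ x in a..b, h x := by
  simp_rw [← indicator_mul_right, mul_one]
  rw [integral_of_le (hpa.trans (hab.trans hbq)), setIntegral_indicator measurableSet_Ioo,
    inter_eq_right.2 (Ioo_subset_Ioc_self.trans (Ioc_subset_Ioc hpa hbq)),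
    ← integral_Ioc_eq_integral_Ioo, integral_of_le hab]

theorem integral_mul_sum_indicator_Ioo {h : ℝ → ℝ} {p q : ℝ}
    (hh : IntervalIntegrable h volume p q) {ι : Type*} (s : Finset ι) (a b c : ι → ℝ)
    (hab : ∀ i ∈ s, p ≤ a i ∧ a i ≤ b i ∧ b i ≤ q) :
    ∫ x in p..q, h x * ∑ i ∈ s, c i * (Ioo (a i) (b i)).indicator (fun _ => (1 : ℝ)) x
      = ∑ i ∈ s, c i * ∫ x in a i..b i, h x := by
  simp_rw [Finset.mul_sum, mul_left_comm (h _)]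
  rw [intervalIntegral.integral_finsetSum]
  · refine Finset.sum_congr rfl fun i hi => ?_
    obtain ⟨hpa, hab, hbq⟩ := hab i hi
    rw [intervalIntegral.integral_const_mul, integral_mul_indicator_Ioo h hpa hab hbq]
  · intro i _
    simp_rw [← indicator_mul_right, mul_one]
    exact IntervalIntegrable.const_mul
      ⟨hh.1.indicator measurableSet_Ioo, hh.2.indicator measurableSet_Ioo⟩ (c i)

/-- for a continuous `L`-periodic `g` and any step function `φ` on `(0,1)`
(a finite linear combination of characteristic functions of subintervals),
`∫_0^1 g(x/ε^α) φ(x) dx → (1/L)(∫_0^L g)·∫_0^1 φ` as `ε → 0⁺`. -/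
theorem stmt3 (g : ℝ → ℝ) (L α : ℝ)
    (hg : Continuous g) (hL : 0 < L) (hper : ∀ y : ℝ, g (y + L) = g y) (hα : 0 < α)
    (φ : ℝ → ℝ) (n : ℕ) (a b : Fin n → ℝ) (c : Fin n → ℝ)
    (hab : ∀ i, 0 ≤ a i ∧ a i ≤ b i ∧ b i ≤ 1)
    (hφ : φ = fun x => ∑ i, c i * Set.indicator (Set.Ioo (a i) (b i)) (fun _ => (1:ℝ)) x) :
    Tendsto (fun ε : ℝ => ∫ x in (0:ℝ)..1, g (x / ε ^ α) * φ x)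
      (nhdsWithin 0 (Ioi 0))
      (nhds ((1 / L) * (∫ s in (0:ℝ)..L, g s) * ∫ x in (0:ℝ)..1, φ x)) := by
  have hab' : ∀ i ∈ Finset.univ, 0 ≤ a i ∧ a i ≤ b i ∧ b i ≤ 1 := fun i _ => hab i
  have hmean : ∫ x in (0:ℝ)..1, φ x = ∑ i, c i * (b i - a i) := by
    simpa [hφ] using integral_mul_sum_indicator_Ioo (h := fun _ => 1)
      intervalIntegrable_const _ a b c hab'
  have hsum (δ : ℝ) :
      ∫ x in (0:ℝ)..1, g (x / δ) * φ x = ∑ i, c i * ∫ x in a i..b i, g (x / δ) := by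
    rw [hφ]
    exact integral_mul_sum_indicator_Ioo (h := fun x => g (x / δ))
      ((hg.comp (continuous_id.div_const δ)).intervalIntegrable 0 1) _ a b c hab'
  simp_rw [hsum]
  rw [hmean, Finset.mul_sum]
  refine tendsto_finsetSum _ fun i _ => ?_
  have hlim := (Function.Periodic.tendsto_intervalIntegral_comp_div hper hL.ne'
    (fun u v => hg.intervalIntegrable u v) (a i) (b i)).comp (tendsto_rpow_nhdsGT_zero hα)
  rw [show 1 / L * (∫ s in (0:ℝ)..L, g s) * (c i * (b i - a i))
      = c i * (((b i - a i) / L) • ∫ x in (0:ℝ)..L, g x) by rw [smul_eq_mul]; ring]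
  exact hlim.const_mul (c i)
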